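/- arXiv:2411.16078 — 4 statements merged into one kernel-verified Lean document; each statement's English description precedes it below -/
import Mathlib

section
/- Under Assumption A, there exists a constant Q > 0 such that the kernel k(t) = t^{α(t)-1}/Γ(α(t)) satisfies |k(t)| ≤ Q for all t ∈ (0,T]. -/
/-!
Since `α(0) = 1` and `|α'| ≤ Q₀`, the mean value inequality gives `1 - α(t) ≤ Q₀ t`, so
`t ^ (α(t) - 1) = exp ((1 - α(t)) (-log t)) ≤ exp (Q₀ · (-t log t)) ≤ exp Q₀` for `t ≤ 1`, while for
`t > 1` the power is at most `1`. The Gamma factor is harmless: `Γ` decreases on `(0, 1]`, so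
`Γ(α(t)) ≥ Γ(1) = 1`.
-/

open Real Set

lemma Real.one_le_Gamma_of_mem_Ioc {x : ℝ} (hx : x ∈ Ioc 0 1) : 1 ≤ Gamma x := by
  simpa using Gamma_strictAntiOn_Ioc.antitoneOn hx ⟨one_pos, le_rfl⟩ hx.2

lemma Real.rpow_sub_one_le_exp {t a C : ℝ} (ht : 0 < t) (ha : a ≤ 1) (haC : 1 - a ≤ C * t) :
    t ^ (a - 1) ≤ exp C := by
  have hC : 0 ≤ C := nonneg_of_mul_nonneg_left (by linarith) ht
  rw [rpow_def_of_pos ht, exp_le_exp]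
  rcases le_or_gt t 1 with ht1 | ht1
  · have hlog : -log t * t ≤ 1 := by
      have := abs_log_mul_self_lt t ht ht1
      linarith [neg_abs_le (log t * t)]
    calc log t * (a - 1) = -log t * (1 - a) := by ring
      _ ≤ -log t * (C * t) :=
          mul_le_mul_of_nonneg_left haC (neg_nonneg.2 (log_nonpos ht.le ht1))
      _ = C * (-log t * t) := by ring
      _ ≤ C * 1 := mul_le_mul_of_nonneg_left hlog hC
      _ = C := mul_one C
  · nlinarith [log_pos ht1]

lemma Real.abs_rpow_sub_one_div_Gamma_le {t a C : ℝ} (ht : 0 < t) (ha : a ∈ Ioc 0 1)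
    (haC : 1 - a ≤ C * t) : |t ^ (a - 1) / Gamma a| ≤ exp C := by
  have hΓ := one_le_Gamma_of_mem_Ioc ha
  rw [abs_of_nonneg (div_nonneg (rpow_nonneg ht.le _) (zero_le_one.trans hΓ))]
  exact (div_le_self (rpow_nonneg ht.le _) hΓ).trans (rpow_sub_one_le_exp ht ha.2 haC)

theorem stmt2_general (T Q₀ αstar : ℝ) (hαstar : 0 < αstar)
    (α α' α'' : ℝ → ℝ)
    (hα : ∀ t ∈ Set.Icc (0:ℝ) T, HasDerivAt α (α' t) t)
    (hrange : ∀ t ∈ Set.Icc (0:ℝ) T, αstar ≤ α t ∧ α t ≤ 1)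
    (h0 : α 0 = 1)
    (hbound : ∀ t ∈ Set.Icc (0:ℝ) T, |α' t| ≤ Q₀ ∧ |α'' t| ≤ Q₀) :
    ∃ Q > 0, ∀ t ∈ Set.Ioc (0:ℝ) T,
      |t ^ (α t - 1) / Real.Gamma (α t)| ≤ Q := by
  refine ⟨exp Q₀, exp_pos Q₀, fun t ht => ?_⟩
  have htT : t ∈ Icc 0 T := Ioc_subset_Icc_self ht
  obtain ⟨hαstar_le, hle_one⟩ := hrange t htT
  have hdrift : |α t - 1| ≤ Q₀ * t := by
    simpa [h0] using norm_image_sub_le_of_norm_deriv_le_segment'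
      (fun x hx => (hα x hx).hasDerivWithinAt)
      (fun x hx => (hbound x (Ico_subset_Icc_self hx)).1) t htT
  exact abs_rpow_sub_one_div_Gamma_le ht.1 ⟨hαstar.trans_le hαstar_le, hle_one⟩
    (by linarith [neg_abs_le (α t - 1)])

theorem stmt2 (T Q₀ αstar : ℝ) (hT : 0 < T) (hQ₀ : 0 < Q₀) (hαstar : 0 < αstar)
    (α α' α'' : ℝ → ℝ)
    (hα : ∀ t ∈ Set.Icc (0:ℝ) T, HasDerivAt α (α' t) t)
    (hα' : ∀ t ∈ Set.Icc (0:ℝ) T, HasDerivAt α' (α'' t) t)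
    (hrange : ∀ t ∈ Set.Icc (0:ℝ) T, αstar ≤ α t ∧ α t ≤ 1)
    (h0 : α 0 = 1)
    (hbound : ∀ t ∈ Set.Icc (0:ℝ) T, |α' t| ≤ Q₀ ∧ |α'' t| ≤ Q₀) :
    ∃ Q > 0, ∀ t ∈ Set.Ioc (0:ℝ) T,
      |t ^ (α t - 1) / Real.Gamma (α t)| ≤ Q :=
  stmt2_general T Q₀ αstar hαstar α α' α'' hα hrange h0 hbound
end

section
/- Under Assumption A, there exists a constant Q > 0 such that the derivative of the variable-exponent Abel kernel satisfies |k'(t)| ≤ Q(1 + |ln t|) for all t ∈ (0,T]. -/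
lemma gamma_ne_neg_nat {x : ℝ} (hx : 0 < x) : ∀ m : ℕ, (x:ℂ) ≠ -m := by
  intro m h
  have h2 : (x:ℂ).re = ((-m : ℂ)).re := by rw [h]
  simp at h2
  have h3 : (0:ℝ) ≤ (m:ℝ) := Nat.cast_nonneg m
  linarith

lemma hasDerivAt_realGamma {x : ℝ} (hx : 0 < x) :
    HasDerivAt Real.Gamma ((deriv Complex.Gamma x).re) x := by
  have h1 : DifferentiableAt ℂ Complex.Gamma x :=
    Complex.differentiableAt_Gamma _ (gamma_ne_neg_nat hx)
  have h2 := h1.hasDerivAt.real_of_complex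
  convert h2 using 2
  rw [Complex.Gamma_ofReal, Complex.ofReal_re]

lemma contAt_derivGamma {x : ℝ} (hx : 0 < x) :
    ContinuousAt (fun y : ℝ => (deriv Complex.Gamma y).re) x := by
  have hopen : IsOpen {s : ℂ | 0 < s.re} := isOpen_lt continuous_const Complex.continuous_re
  have hd : DifferentiableOn ℂ Complex.Gamma {s : ℂ | 0 < s.re} := fun s hs =>
    (Complex.differentiableAt_Gamma _ (fun m h => by
      have h2 : s.re = ((-m:ℂ)).re := by rw [h]
      simp at h2
      have h1 : (0:ℝ) < s.re := hs
      have h3 : (0:ℝ) ≤ (m:ℝ) := Nat.cast_nonneg m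
      rw [h2] at h1
      linarith)).differentiableWithinAt
  have han := hd.analyticOnNhd hopen
  have h3 : AnalyticAt ℂ (deriv Complex.Gamma) x := han.deriv x (by simpa using hx)
  exact (Complex.continuous_re.continuousAt.comp
    (h3.continuousAt.comp Complex.continuous_ofReal.continuousAt))

lemma aux_tlog {t T : ℝ} (ht : 0 < t) (htT : t ≤ T) : t * |Real.log t| ≤ 1 + T^2 := by
  have hT0 : 0 < T := lt_of_lt_of_le ht htT
  rcases le_or_gt t 1 with h | h
  · have hl : Real.log t ≤ 0 := Real.log_nonpos ht.le h
    rw [abs_of_nonpos hl]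
    have h2 : Real.log (1/t) ≤ 1/t - 1 := Real.log_le_sub_one_of_pos (by positivity)
    rw [one_div, Real.log_inv] at h2
    have h3 : t * -Real.log t ≤ t * (t⁻¹ - 1) := mul_le_mul_of_nonneg_left h2 ht.le
    have h4 : t * (t⁻¹ - 1) = 1 - t := by field_simp
    nlinarith [sq_nonneg T]
  · have hl : 0 ≤ Real.log t := Real.log_nonneg h.le
    rw [abs_of_nonneg hl]
    have h2 : Real.log t ≤ t - 1 := Real.log_le_sub_one_of_pos ht
    nlinarith

theorem stmt3 (T Q₀ αstar : ℝ) (hT : 0 < T) (hQ₀ : 0 < Q₀) (hαstar : 0 < αstar)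
    (α α' α'' : ℝ → ℝ) (k k' : ℝ → ℝ)
    (hα : ∀ t ∈ Set.Icc (0:ℝ) T, HasDerivAt α (α' t) t)
    (hα' : ∀ t ∈ Set.Icc (0:ℝ) T, HasDerivAt α' (α'' t) t)
    (hrange : ∀ t ∈ Set.Icc (0:ℝ) T, αstar ≤ α t ∧ α t ≤ 1)
    (h0 : α 0 = 1)
    (hbound : ∀ t ∈ Set.Icc (0:ℝ) T, |α' t| ≤ Q₀ ∧ |α'' t| ≤ Q₀)
    (hk : ∀ t ∈ Set.Ioc (0:ℝ) T, k t = t ^ (α t - 1) / Real.Gamma (α t))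
    (hk' : ∀ t ∈ Set.Ioc (0:ℝ) T, HasDerivAt k (k' t) t) :
    ∃ Q > 0, ∀ t ∈ Set.Ioc (0:ℝ) T, |k' t| ≤ Q * (1 + |Real.log t|) := by
  have hsub : Set.Icc αstar 1 ⊆ Set.Ioi (0:ℝ) := fun x hx => lt_of_lt_of_le hαstar hx.1
  have hαs1 : αstar ≤ 1 := by
    have h := hrange T ⟨hT.le, le_refl T⟩; linarith [h.1, h.2]
  have hne : (Set.Icc αstar (1:ℝ)).Nonempty := ⟨αstar, le_refl _, hαs1⟩
  have hcomp : IsCompact (Set.Icc αstar (1:ℝ)) := isCompact_Icc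
  have hcontG : ContinuousOn Real.Gamma (Set.Icc αstar 1) := fun x hx =>
    ((hasDerivAt_realGamma (hsub hx)).differentiableAt.continuousAt).continuousWithinAt
  obtain ⟨x₀, hx₀, hmin'⟩ := hcomp.exists_isMinOn hne hcontG
  have hmin : ∀ y ∈ Set.Icc αstar (1:ℝ), Real.Gamma x₀ ≤ Real.Gamma y := fun y hy => hmin' hy
  set m := Real.Gamma x₀ with hm
  have hm0 : 0 < m := Real.Gamma_pos_of_pos (hsub hx₀)
  obtain ⟨M, hM⟩ := hcomp.exists_bound_of_continuousOn hcontG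
  have hcontD : ContinuousOn (fun y : ℝ => (deriv Complex.Gamma y).re) (Set.Icc αstar 1) :=
    fun x hx => (contAt_derivGamma (hsub hx)).continuousWithinAt
  obtain ⟨M', hM'⟩ := hcomp.exists_bound_of_continuousOn hcontD
  have hM'0 : 0 ≤ M' := le_trans (norm_nonneg _) (hM' αstar ⟨le_refl _, hαs1⟩)
  have hMm : m ≤ M := by
    have := hM x₀ hx₀
    rw [Real.norm_eq_abs] at this
    exact le_trans (le_abs_self _) this
  have hM0 : 0 < M := lt_of_lt_of_le hm0 hMm
  set E := Real.exp (Q₀ * (1 + T^2)) with hE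
  have hE0 : 0 < E := Real.exp_pos _
  have hMM'0 : (0:ℝ) ≤ M + M' := by linarith
  refine ⟨E * Q₀ * (M + M') / m^2 + 1, ?_, ?_⟩
  · have h1 : (0:ℝ) ≤ E * Q₀ * (M + M') / m^2 :=
      div_nonneg (mul_nonneg (mul_nonneg hE0.le hQ₀.le) hMM'0) (sq_nonneg m)
    linarith
  intro t ht
  obtain ⟨ht0, htT⟩ := ht
  have tIcc : t ∈ Set.Icc (0:ℝ) T := ⟨ht0.le, htT⟩
  have hA := hrange t tIcc
  have hAmem : α t ∈ Set.Icc αstar 1 := ⟨hA.1, hA.2⟩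
  have hApos : 0 < α t := hsub hAmem
  have hGpos : 0 < Real.Gamma (α t) := Real.Gamma_pos_of_pos hApos
  have hb : |α' t| ≤ Q₀ := (hbound t tIcc).1
  have hlip : |α t - 1| ≤ Q₀ * t := by
    have h := (convex_Icc (0:ℝ) T).norm_image_sub_le_of_norm_hasDerivWithin_le
      (fun x hx => (hα x hx).hasDerivWithinAt) (fun x hx => by
        rw [Real.norm_eq_abs]; exact (hbound x hx).1)
      (⟨le_refl 0, hT.le⟩ : (0:ℝ) ∈ Set.Icc (0:ℝ) T) tIcc
    rw [h0, Real.norm_eq_abs, Real.norm_eq_abs, sub_zero, abs_of_pos ht0] at h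
    exact h
  have htl := aux_tlog ht0 htT
  set L := Real.log t with hL
  have hexp1 : |(α t - 1) * L| ≤ Q₀ * (1 + T^2) := by
    rw [abs_mul]
    calc |α t - 1| * |L| ≤ (Q₀ * t) * |L| :=
          mul_le_mul_of_nonneg_right hlip (abs_nonneg _)
      _ = Q₀ * (t * |L|) := by ring
      _ ≤ Q₀ * (1 + T^2) := mul_le_mul_of_nonneg_left htl hQ₀.le
  have hNle : Real.exp ((α t - 1) * L) ≤ E :=
    Real.exp_le_exp.2 (le_trans (le_abs_self _) hexp1)
  have hN0 : 0 < Real.exp ((α t - 1) * L) := Real.exp_pos _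
  -- derivative of the explicit function
  have hg2 : HasDerivAt (fun s => (α s - 1) * Real.log s) (α' t * L + (α t - 1) * t⁻¹) t :=
    ((hα t tIcc).sub_const 1).mul (Real.hasDerivAt_log ht0.ne')
  have hgN : HasDerivAt (fun s => Real.exp ((α s - 1) * Real.log s))
      (Real.exp ((α t - 1) * L) * (α' t * L + (α t - 1) * t⁻¹)) t := hg2.exp
  have hgD : HasDerivAt (fun s => Real.Gamma (α s))
      ((deriv Complex.Gamma (α t)).re * α' t) t :=
    (hasDerivAt_realGamma hApos).comp t (hα t tIcc)
  have hgdiv := hgN.div hgD hGpos.ne'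
  have hmem : t ∈ Set.Iic t := Set.mem_Iic.2 le_rfl
  have hu : UniqueDiffWithinAt ℝ (Set.Iic t) t := uniqueDiffOn_Iic t t hmem
  have hev : k =ᶠ[nhdsWithin t (Set.Iic t)]
      (fun s => Real.exp ((α s - 1) * Real.log s) / Real.Gamma (α s)) := by
    filter_upwards [self_mem_nhdsWithin, mem_nhdsWithin_of_mem_nhds (Ioi_mem_nhds ht0)]
      with s hs1 hs2
    rw [hk s ⟨hs2, le_trans hs1 htT⟩, Real.rpow_def_of_pos hs2, mul_comm]
  have hgt : (fun s => Real.exp ((α s - 1) * Real.log s) / Real.Gamma (α s)) t = k t := by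
    rw [hk t ⟨ht0, htT⟩, Real.rpow_def_of_pos ht0, mul_comm]
  have h1 : HasDerivWithinAt (fun s => Real.exp ((α s - 1) * Real.log s) / Real.Gamma (α s))
      (k' t) (Set.Iic t) t :=
    ((hk' t ⟨ht0, htT⟩).hasDerivWithinAt).congr_of_eventuallyEq hev.symm hgt
  have hkeq : k' t = (Real.exp ((α t - 1) * L) * (α' t * L + (α t - 1) * t⁻¹) *
      Real.Gamma (α t) - Real.exp ((α t - 1) * L) * ((deriv Complex.Gamma (α t)).re * α' t)) /
      Real.Gamma (α t) ^ 2 :=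
    (h1.derivWithin hu).symm.trans (hgdiv.hasDerivWithinAt.derivWithin hu)
  -- bounds
  have hGM : Real.Gamma (α t) ≤ M := by
    have := hM _ hAmem; rw [Real.norm_eq_abs] at this; exact le_trans (le_abs_self _) this
  have hmG : m ≤ Real.Gamma (α t) := hmin _ hAmem
  have hD' : |(deriv Complex.Gamma (α t)).re| ≤ M' := by
    have := hM' _ hAmem; rwa [Real.norm_eq_abs] at this
  have hin : |α' t * L + (α t - 1) * t⁻¹| ≤ Q₀ * |L| + Q₀ := by
    calc |α' t * L + (α t - 1) * t⁻¹| ≤ |α' t * L| + |(α t - 1) * t⁻¹| := abs_add_le _ _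
      _ ≤ Q₀ * |L| + Q₀ := by
          rw [abs_mul, abs_mul, abs_inv, abs_of_pos ht0]
          have hh1 : |α' t| * |L| ≤ Q₀ * |L| := mul_le_mul_of_nonneg_right hb (abs_nonneg _)
          have hh2 : |α t - 1| * t⁻¹ ≤ Q₀ := by
            calc |α t - 1| * t⁻¹ ≤ (Q₀ * t) * t⁻¹ :=
                  mul_le_mul_of_nonneg_right hlip (inv_nonneg.2 ht0.le)
              _ = Q₀ := by field_simp
          linarith
  have hA1 : |Real.exp ((α t - 1) * L) * (α' t * L + (α t - 1) * t⁻¹) * Real.Gamma (α t)|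
      ≤ E * (Q₀ * |L| + Q₀) * M := by
    rw [abs_mul, abs_mul, abs_of_pos hN0, abs_of_pos hGpos]
    have h2 : Real.exp ((α t - 1) * L) * |α' t * L + (α t - 1) * t⁻¹|
        ≤ E * (Q₀ * |L| + Q₀) :=
      mul_le_mul hNle hin (abs_nonneg _) hE0.le
    exact mul_le_mul h2 hGM hGpos.le (by positivity)
  have hA2 : |Real.exp ((α t - 1) * L) * ((deriv Complex.Gamma (α t)).re * α' t)|
      ≤ E * (M' * Q₀) := by
    rw [abs_mul, abs_mul, abs_of_pos hN0]
    exact mul_le_mul hNle (mul_le_mul hD' hb (abs_nonneg _) hM'0)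
      (mul_nonneg (abs_nonneg _) (abs_nonneg _)) hE0.le
  have habs : |Real.exp ((α t - 1) * L) * (α' t * L + (α t - 1) * t⁻¹) * Real.Gamma (α t)
      - Real.exp ((α t - 1) * L) * ((deriv Complex.Gamma (α t)).re * α' t)|
      ≤ E * Q₀ * (M + M') * (1 + |L|) := by
    have htri := abs_sub (Real.exp ((α t - 1) * L) * (α' t * L + (α t - 1) * t⁻¹) *
      Real.Gamma (α t)) (Real.exp ((α t - 1) * L) * ((deriv Complex.Gamma (α t)).re * α' t))
    nlinarith [mul_nonneg (mul_nonneg (mul_nonneg hE0.le hQ₀.le) hM'0) (abs_nonneg L)]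
  rw [hkeq, abs_div, abs_of_pos (pow_pos hGpos 2)]
  calc _ ≤ (E * Q₀ * (M + M') * (1 + |L|)) / m^2 := by
        apply div_le_div₀ (by positivity) habs (by positivity)
        exact pow_le_pow_left₀ hm0.le hmG 2
    _ = (E * Q₀ * (M + M') / m^2) * (1 + |L|) := by ring
    _ ≤ (E * Q₀ * (M + M') / m^2 + 1) * (1 + |L|) := by
        apply mul_le_mul_of_nonneg_right (by linarith) (by positivity)
end

section
/- Under Assumption A, there exists a constant Q > 0 such that the second derivative of the variable-exponent Abel kernel satisfies |k''(t)| ≤ Q t^{-1} for all t ∈ (0,T]. -/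
open Set
open scoped ContDiff

lemma gamma_contDiffAt {n : ℕ∞} {x : ℝ} (hx : 0 < x) : ContDiffAt ℝ n Real.Gamma x := by
  have hS : IsOpen {z : ℂ | 0 < z.re} := isOpen_lt continuous_const Complex.continuous_re
  have hd : DifferentiableOn ℂ Complex.Gamma {z : ℂ | 0 < z.re} := fun z hz =>
    (Complex.differentiableAt_Gamma z (fun m => by
      intro h
      rw [h] at hz
      simp only [mem_setOf_eq] at hz
      have h2 : ((-m : ℂ)).re = -(m:ℝ) := by simp
      rw [h2] at hz
      have : (0:ℝ) ≤ (m:ℝ) := Nat.cast_nonneg m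
      linarith)).differentiableWithinAt
  have ha : AnalyticAt ℂ Complex.Gamma ↑x := hd.analyticAt (hS.mem_nhds (by simpa using hx))
  have hc : ContDiffAt ℂ n Complex.Gamma ↑x := ha.contDiffAt
  have h2 : ContDiffAt ℝ n (fun y : ℝ => (Complex.Gamma ↑y).re) x :=
    (Complex.reCLM.contDiff.contDiffAt (n := n)).comp x
      ((hc.restrict_scalars ℝ).comp x (Complex.ofRealCLM.contDiff.contDiffAt))
  have h3 : Real.Gamma = fun y : ℝ => (Complex.Gamma ↑y).re := by
    funext y; rw [Complex.Gamma_ofReal, Complex.ofReal_re]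
  rw [h3]; exact h2

lemma gamma_cdOn : ContDiffOn ℝ ∞ Real.Gamma (Ioi 0) :=
  fun x hx => (gamma_contDiffAt hx).contDiffWithinAt

lemma dgamma_cdOn : DifferentiableOn ℝ Real.Gamma (Ioi 0) ∧
    ContDiffOn ℝ ∞ (deriv Real.Gamma) (Ioi 0) :=
  (contDiffOn_infty_iff_deriv_of_isOpen isOpen_Ioi).mp gamma_cdOn

lemma ddgamma_cdOn : DifferentiableOn ℝ (deriv Real.Gamma) (Ioi 0) ∧
    ContDiffOn ℝ ∞ (deriv (deriv Real.Gamma)) (Ioi 0) :=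
  (contDiffOn_infty_iff_deriv_of_isOpen isOpen_Ioi).mp dgamma_cdOn.2

lemma hasDerivAt_gamma {x : ℝ} (hx : 0 < x) :
    HasDerivAt Real.Gamma (deriv Real.Gamma x) x :=
  ((dgamma_cdOn.1 x hx).differentiableAt (isOpen_Ioi.mem_nhds hx)).hasDerivAt

lemma hasDerivAt_dgamma {x : ℝ} (hx : 0 < x) :
    HasDerivAt (deriv Real.Gamma) (deriv (deriv Real.Gamma) x) x :=
  ((ddgamma_cdOn.1 x hx).differentiableAt (isOpen_Ioi.mem_nhds hx)).hasDerivAt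

lemma cont_dgamma : ContinuousOn (deriv Real.Gamma) (Ioi 0) := dgamma_cdOn.2.continuousOn
lemma cont_ddgamma : ContinuousOn (deriv (deriv Real.Gamma)) (Ioi 0) :=
  ddgamma_cdOn.2.continuousOn

noncomputable def dg (x : ℝ) : ℝ := deriv Real.Gamma x / Real.Gamma x
noncomputable def dg' (x : ℝ) : ℝ :=
  (deriv (deriv Real.Gamma) x * Real.Gamma x - deriv Real.Gamma x * deriv Real.Gamma x) /
    Real.Gamma x ^ 2
noncomputable def psi (α : ℝ → ℝ) (t : ℝ) : ℝ :=
  (α t - 1) * Real.log t - Real.log (Real.Gamma (α t))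
noncomputable def psi1 (α α' : ℝ → ℝ) (t : ℝ) : ℝ :=
  α' t * Real.log t + (α t - 1) * t⁻¹ - dg (α t) * α' t
noncomputable def psi2 (α α' α'' : ℝ → ℝ) (t : ℝ) : ℝ :=
  (α'' t * Real.log t + α' t * t⁻¹) + (α' t * t⁻¹ + (α t - 1) * (-(t ^ 2)⁻¹)) -
    ((dg' (α t) * α' t) * α' t + dg (α t) * α'' t)
noncomputable def gfun (α : ℝ → ℝ) (t : ℝ) : ℝ := Real.exp (psi α t)
noncomputable def gfun1 (α α' : ℝ → ℝ) (t : ℝ) : ℝ := Real.exp (psi α t) * psi1 α α' t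
noncomputable def gfun2 (α α' α'' : ℝ → ℝ) (t : ℝ) : ℝ :=
  (Real.exp (psi α t) * psi1 α α' t) * psi1 α α' t + Real.exp (psi α t) * psi2 α α' α'' t

lemma hasDerivAt_dg {x : ℝ} (hx : 0 < x) : HasDerivAt dg (dg' x) x :=
  (hasDerivAt_dgamma hx).div (hasDerivAt_gamma hx) (Real.Gamma_pos_of_pos hx).ne'

lemma deriv_lemmas (α α' α'' : ℝ → ℝ) {t : ℝ} (ht : 0 < t) (hα0 : 0 < α t)
    (hαt : HasDerivAt α (α' t) t) (hα't : HasDerivAt α' (α'' t) t) :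
    HasDerivAt (gfun α) (gfun1 α α' t) t ∧ HasDerivAt (gfun1 α α') (gfun2 α α' α'' t) t := by
  have hΓpos := Real.Gamma_pos_of_pos hα0
  have hG : HasDerivAt (fun s => Real.Gamma (α s)) (deriv Real.Gamma (α t) * α' t) t :=
    (hasDerivAt_gamma hα0).comp t hαt
  have hlog := Real.hasDerivAt_log ht.ne'
  have hA : HasDerivAt (fun s => (α s - 1) * Real.log s)
      (α' t * Real.log t + (α t - 1) * t⁻¹) t := (hαt.sub_const 1).mul hlog
  have hB0 : HasDerivAt (fun s => Real.log (Real.Gamma (α s)))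
      ((Real.Gamma (α t))⁻¹ * (deriv Real.Gamma (α t) * α' t)) t :=
    by have h := (Real.hasDerivAt_log hΓpos.ne').comp t hG; exact h
  have hB : HasDerivAt (fun s => Real.log (Real.Gamma (α s))) (dg (α t) * α' t) t := by
    convert hB0 using 1; unfold dg; field_simp
  have hψ : HasDerivAt (psi α) (psi1 α α' t) t := hA.sub hB
  have hdgα : HasDerivAt (fun s => dg (α s)) (dg' (α t) * α' t) t :=
    (hasDerivAt_dg hα0).comp t hαt
  have hinv : HasDerivAt (fun s : ℝ => s⁻¹) (-(t ^ 2)⁻¹) t := hasDerivAt_inv ht.ne'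
  have hψ' : HasDerivAt (psi1 α α') (psi2 α α' α'' t) t :=
    ((hα't.mul hlog).add ((hαt.sub_const 1).mul hinv)).sub (hdgα.mul hα't)
  exact ⟨hψ.exp, hψ.exp.mul hψ'⟩

lemma log_bound1 {T : ℝ} (hT : 0 < T) :
    ∃ Cl, 0 < Cl ∧ ∀ t ∈ Ioc (0:ℝ) T, t * |Real.log t| ≤ Cl := by
  refine ⟨max 1 (T * |Real.log T|), lt_of_lt_of_le one_pos (le_max_left _ _), ?_⟩
  intro t ht
  rcases le_total t 1 with h | h
  · refine le_trans ?_ (le_max_left _ _)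
    rw [abs_of_nonpos (Real.log_nonpos ht.1.le h), ← Real.log_inv]
    have htne : t ≠ 0 := ht.1.ne'
    have h3 : Real.log t⁻¹ ≤ t⁻¹ - 1 := Real.log_le_sub_one_of_pos (inv_pos.mpr ht.1)
    have h4 : t * Real.log t⁻¹ ≤ t * (t⁻¹ - 1) := mul_le_mul_of_nonneg_left h3 ht.1.le
    have h5 : t * (t⁻¹ - 1) = 1 - t := by field_simp
    linarith [ht.1]
  · refine le_trans ?_ (le_max_right _ _)
    rw [abs_of_nonneg (Real.log_nonneg h)]
    have h2 : Real.log t ≤ |Real.log T| := by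
      refine le_trans ?_ (le_abs_self _)
      exact Real.log_le_log (by linarith) ht.2
    have h3 : (0:ℝ) ≤ Real.log t := Real.log_nonneg h
    nlinarith [ht.2, abs_nonneg (Real.log T)]

lemma log_bound2 {T : ℝ} (hT : 0 < T) :
    ∃ C, 0 ≤ C ∧ ∀ t ∈ Ioc (0:ℝ) T, t * Real.log t ^ 2 ≤ C := by
  refine ⟨max 4 (T * Real.log T ^ 2), le_trans (by norm_num) (le_max_left _ _), ?_⟩
  intro t ht
  rcases le_total t 1 with h | h
  · refine le_trans ?_ (le_max_left _ _)
    set s := Real.sqrt t with hs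
    have hspos : 0 < s := Real.sqrt_pos.mpr ht.1
    have hst : s * s = t := Real.mul_self_sqrt ht.1.le
    have hs1 : s ≤ 1 := Real.sqrt_le_one.mpr h
    have hlogt : Real.log t = 2 * Real.log s := by
      rw [← hst, Real.log_mul hspos.ne' hspos.ne']; ring
    have habs : |Real.log s| ≤ s⁻¹ := by
      rw [abs_of_nonpos (Real.log_nonpos hspos.le hs1), ← Real.log_inv]
      have := Real.log_le_sub_one_of_pos (x := s⁻¹) (inv_pos.mpr hspos)
      have hi : (0:ℝ) < s⁻¹ := inv_pos.mpr hspos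
      linarith
    have h3 : Real.log s ^ 2 ≤ (s⁻¹) ^ 2 := by
      calc Real.log s ^ 2 = |Real.log s| ^ 2 := (sq_abs _).symm
      _ ≤ (s⁻¹) ^ 2 := by nlinarith [abs_nonneg (Real.log s)]
    have h4 : t * (2 * Real.log s) ^ 2 = 4 * ((s * s) * Real.log s ^ 2) := by
      rw [← hst]; ring
    have h5 : (s * s) * Real.log s ^ 2 ≤ (s * s) * (s⁻¹) ^ 2 :=
      mul_le_mul_of_nonneg_left h3 (by positivity)
    have h6 : (s * s) * (s⁻¹) ^ 2 = 1 := by rw [pow_two]; field_simp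
    rw [hlogt, h4]
    linarith
  · refine le_trans ?_ (le_max_right _ _)
    have h3 : (0:ℝ) ≤ Real.log t := Real.log_nonneg h
    have h4 : Real.log t ≤ Real.log T := Real.log_le_log (by linarith) ht.2
    have h5 : Real.log t ^ 2 ≤ Real.log T ^ 2 := pow_le_pow_left₀ h3 h4 2
    calc t * Real.log t ^ 2 ≤ T * Real.log t ^ 2 :=
          mul_le_mul_of_nonneg_right ht.2 (sq_nonneg _)
      _ ≤ T * Real.log T ^ 2 := mul_le_mul_of_nonneg_left h5 hT.le
lemma exp_psi_bound {T Q₀ αstar c Cl : ℝ} (hQ₀ : 0 < Q₀) (hcpos : 0 < c)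
    {α : ℝ → ℝ}
    (hαS : ∀ t ∈ Ioc (0:ℝ) T, α t ∈ Icc αstar 1)
    (hαpos : ∀ t ∈ Ioc (0:ℝ) T, 0 < α t)
    (hcle : ∀ x ∈ Icc αstar 1, c ≤ Real.Gamma x)
    (hsub : ∀ t ∈ Ioc (0:ℝ) T, |α t - 1| ≤ Q₀ * t)
    (hCl : ∀ t ∈ Ioc (0:ℝ) T, t * |Real.log t| ≤ Cl) :
    ∃ M, 0 < M ∧ ∀ t ∈ Ioc (0:ℝ) T, Real.exp (psi α t) ≤ M := by
  refine ⟨Real.exp (Q₀ * Cl) / c, by positivity, ?_⟩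
  intro t ht
  have hΓpos := Real.Gamma_pos_of_pos (hαpos t ht)
  have e1 : Real.exp (psi α t) = Real.exp ((α t - 1) * Real.log t) / Real.Gamma (α t) := by
    unfold psi
    rw [Real.exp_sub, Real.exp_log hΓpos]
  have e2 : (α t - 1) * Real.log t ≤ Q₀ * Cl := by
    have h1 : (α t - 1) * Real.log t ≤ |α t - 1| * |Real.log t| := by
      calc (α t - 1) * Real.log t ≤ |(α t - 1) * Real.log t| := le_abs_self _
      _ = |α t - 1| * |Real.log t| := abs_mul _ _
    have h2 : |α t - 1| * |Real.log t| ≤ (Q₀ * t) * |Real.log t| :=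
      mul_le_mul_of_nonneg_right (hsub t ht) (abs_nonneg _)
    have h3 : Q₀ * (t * |Real.log t|) ≤ Q₀ * Cl :=
      mul_le_mul_of_nonneg_left (hCl t ht) hQ₀.le
    nlinarith
  have e3 : Real.exp ((α t - 1) * Real.log t) ≤ Real.exp (Q₀ * Cl) := Real.exp_le_exp.mpr e2
  have e4 : c ≤ Real.Gamma (α t) := hcle _ (hαS t ht)
  rw [e1]
  exact div_le_div₀ (Real.exp_pos _).le e3 hcpos e4

lemma psi1_abs_bound {T Q₀ αstar C1 : ℝ} (hQ₀ : 0 < Q₀) (hC1n : 0 ≤ C1)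
    {α α' : ℝ → ℝ} {t : ℝ} (ht : t ∈ Ioc (0:ℝ) T)
    (hαS : α t ∈ Icc αstar 1)
    (hC1 : ∀ x ∈ Icc αstar 1, ‖dg x‖ ≤ C1)
    (hsubt : |α t - 1| ≤ Q₀ * t)
    (hα'b : |α' t| ≤ Q₀) :
    |psi1 α α' t| ≤ Q₀ * |Real.log t| + (Q₀ + C1 * Q₀) := by
  unfold psi1
  have i1 : |α' t * Real.log t| ≤ Q₀ * |Real.log t| := by
    rw [abs_mul]
    exact mul_le_mul_of_nonneg_right hα'b (abs_nonneg _)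
  have i2 : |(α t - 1) * t⁻¹| ≤ Q₀ := by
    rw [abs_mul, abs_of_nonneg (inv_nonneg.mpr ht.1.le)]
    have := mul_le_mul_of_nonneg_right hsubt (inv_nonneg.mpr ht.1.le)
    have ht1 : t * t⁻¹ = 1 := mul_inv_cancel₀ ht.1.ne'
    nlinarith
  have i3 : |dg (α t) * α' t| ≤ C1 * Q₀ := by
    rw [abs_mul]
    have := hC1 _ hαS
    rw [Real.norm_eq_abs] at this
    exact mul_le_mul this hα'b (abs_nonneg _) hC1n
  calc |α' t * Real.log t + (α t - 1) * t⁻¹ - dg (α t) * α' t|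
      ≤ |α' t * Real.log t + (α t - 1) * t⁻¹| + |dg (α t) * α' t| := abs_sub _ _
    _ ≤ |α' t * Real.log t| + |(α t - 1) * t⁻¹| + |dg (α t) * α' t| := by
        have := abs_add_le (α' t * Real.log t) ((α t - 1) * t⁻¹); linarith
    _ ≤ Q₀ * |Real.log t| + (Q₀ + C1 * Q₀) := by linarith

lemma psi1_bound {T Q₀ αstar C1 Cl Cl2 : ℝ} (hT : 0 < T) (hQ₀ : 0 < Q₀) (hC1n : 0 ≤ C1)
    (hCln : 0 < Cl) (hCl2n : 0 ≤ Cl2)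
    {α α' : ℝ → ℝ}
    (hαS : ∀ t ∈ Ioc (0:ℝ) T, α t ∈ Icc αstar 1)
    (hC1 : ∀ x ∈ Icc αstar 1, ‖dg x‖ ≤ C1)
    (hsub : ∀ t ∈ Ioc (0:ℝ) T, |α t - 1| ≤ Q₀ * t)
    (hα'b : ∀ t ∈ Ioc (0:ℝ) T, |α' t| ≤ Q₀)
    (hCl : ∀ t ∈ Ioc (0:ℝ) T, t * |Real.log t| ≤ Cl)
    (hCl2 : ∀ t ∈ Ioc (0:ℝ) T, t * Real.log t ^ 2 ≤ Cl2) :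
    ∃ B, 0 ≤ B ∧ ∀ t ∈ Ioc (0:ℝ) T, t * psi1 α α' t ^ 2 ≤ B := by
  set K := Q₀ + C1 * Q₀ with hKdef
  have hKn : 0 ≤ K := by positivity
  refine ⟨Q₀ ^ 2 * Cl2 + 2 * Q₀ * K * Cl + K ^ 2 * T, by positivity, ?_⟩
  intro t ht
  have habs : |psi1 α α' t| ≤ Q₀ * |Real.log t| + K :=
    psi1_abs_bound hQ₀ hC1n ht (hαS t ht) hC1 (hsub t ht) (hα'b t ht)
  have hsq : psi1 α α' t ^ 2 ≤ (Q₀ * |Real.log t| + K) ^ 2 := by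
    calc psi1 α α' t ^ 2 = |psi1 α α' t| ^ 2 := (sq_abs _).symm
      _ ≤ (Q₀ * |Real.log t| + K) ^ 2 := by nlinarith [abs_nonneg (psi1 α α' t)]
  have hexp : t * (Q₀ * |Real.log t| + K) ^ 2 =
      Q₀ ^ 2 * (t * |Real.log t| ^ 2) + 2 * Q₀ * K * (t * |Real.log t|) + K ^ 2 * t := by ring
  have hl2 : t * |Real.log t| ^ 2 ≤ Cl2 := by rw [sq_abs]; exact hCl2 t ht
  have e1 : Q₀ ^ 2 * (t * |Real.log t| ^ 2) ≤ Q₀ ^ 2 * Cl2 :=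
    mul_le_mul_of_nonneg_left hl2 (by positivity)
  have e2 : 2 * Q₀ * K * (t * |Real.log t|) ≤ 2 * Q₀ * K * Cl :=
    mul_le_mul_of_nonneg_left (hCl t ht) (by positivity)
  have e3 : K ^ 2 * t ≤ K ^ 2 * T := mul_le_mul_of_nonneg_left ht.2 (by positivity)
  have e4 : t * psi1 α α' t ^ 2 ≤ t * (Q₀ * |Real.log t| + K) ^ 2 :=
    mul_le_mul_of_nonneg_left hsq ht.1.le
  linarith [hexp ▸ e4]
lemma psi2_bound {T Q₀ αstar C1 C2 Cl : ℝ} (hT : 0 < T) (hQ₀ : 0 < Q₀)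
    (hC1n : 0 ≤ C1) (hC2n : 0 ≤ C2) (hCln : 0 < Cl)
    {α α' α'' : ℝ → ℝ}
    (hαS : ∀ t ∈ Ioc (0:ℝ) T, α t ∈ Icc αstar 1)
    (hC1 : ∀ x ∈ Icc αstar 1, ‖dg x‖ ≤ C1)
    (hC2 : ∀ x ∈ Icc αstar 1, ‖dg' x‖ ≤ C2)
    (hsub : ∀ t ∈ Ioc (0:ℝ) T, |α t - 1| ≤ Q₀ * t)
    (hα'b : ∀ t ∈ Ioc (0:ℝ) T, |α' t| ≤ Q₀)
    (hα''b : ∀ t ∈ Ioc (0:ℝ) T, |α'' t| ≤ Q₀)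
    (hCl : ∀ t ∈ Ioc (0:ℝ) T, t * |Real.log t| ≤ Cl) :
    ∃ B, 0 ≤ B ∧ ∀ t ∈ Ioc (0:ℝ) T, t * |psi2 α α' α'' t| ≤ B := by
  refine ⟨Q₀ * Cl + 3 * Q₀ + T * C2 * Q₀ ^ 2 + T * C1 * Q₀, by positivity, ?_⟩
  intro t ht
  have ht1 : t * t⁻¹ = 1 := mul_inv_cancel₀ ht.1.ne'
  have htne : t ≠ 0 := ht.1.ne'
  have hdgb : |dg (α t)| ≤ C1 := by
    have := hC1 _ (hαS t ht); rwa [Real.norm_eq_abs] at this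
  have hdg'b : |dg' (α t)| ≤ C2 := by
    have := hC2 _ (hαS t ht); rwa [Real.norm_eq_abs] at this
  have habs : |psi2 α α' α'' t| ≤
      |α'' t * Real.log t| + |α' t * t⁻¹| + (|α' t * t⁻¹| + |(α t - 1) * (-(t ^ 2)⁻¹)|) +
        (|(dg' (α t) * α' t) * α' t| + |dg (α t) * α'' t|) := by
    unfold psi2
    have a1 := abs_add_le (α'' t * Real.log t) (α' t * t⁻¹)
    have a2 := abs_add_le (α' t * t⁻¹) ((α t - 1) * (-(t ^ 2)⁻¹))
    have a3 := abs_add_le ((dg' (α t) * α' t) * α' t) (dg (α t) * α'' t)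
    have a4 := abs_add_le (α'' t * Real.log t + α' t * t⁻¹)
      (α' t * t⁻¹ + (α t - 1) * (-(t ^ 2)⁻¹))
    have a5 := abs_sub (α'' t * Real.log t + α' t * t⁻¹ +
      (α' t * t⁻¹ + (α t - 1) * (-(t ^ 2)⁻¹))) ((dg' (α t) * α' t) * α' t + dg (α t) * α'' t)
    linarith
  have j1 : t * |α'' t * Real.log t| ≤ Q₀ * Cl := by
    rw [abs_mul]
    have h1 : t * (|α'' t| * |Real.log t|) ≤ t * (Q₀ * |Real.log t|) :=
      mul_le_mul_of_nonneg_left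
        (mul_le_mul_of_nonneg_right (hα''b t ht) (abs_nonneg _)) ht.1.le
    have h2 : Q₀ * (t * |Real.log t|) ≤ Q₀ * Cl :=
      mul_le_mul_of_nonneg_left (hCl t ht) hQ₀.le
    have h3 : t * (Q₀ * |Real.log t|) = Q₀ * (t * |Real.log t|) := by ring
    linarith
  have j2 : t * |α' t * t⁻¹| ≤ Q₀ := by
    rw [abs_mul, abs_of_nonneg (inv_nonneg.mpr ht.1.le)]
    have h1 : t * (|α' t| * t⁻¹) = |α' t| := by field_simp
    rw [h1]; exact hα'b t ht
  have j3 : t * |(α t - 1) * (-(t ^ 2)⁻¹)| ≤ Q₀ := by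
    rw [abs_mul, abs_neg, abs_of_nonneg (inv_nonneg.mpr (sq_nonneg t))]
    have h1 : |α t - 1| ≤ Q₀ * t := hsub t ht
    have h2 : t * (|α t - 1| * (t ^ 2)⁻¹) ≤ t * ((Q₀ * t) * (t ^ 2)⁻¹) :=
      mul_le_mul_of_nonneg_left
        (mul_le_mul_of_nonneg_right h1 (inv_nonneg.mpr (sq_nonneg t))) ht.1.le
    have h3 : t * ((Q₀ * t) * (t ^ 2)⁻¹) = Q₀ := by
      field_simp
    linarith
  have j4 : t * |(dg' (α t) * α' t) * α' t| ≤ T * C2 * Q₀ ^ 2 := by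
    rw [abs_mul, abs_mul]
    have h1 : |dg' (α t)| * |α' t| * |α' t| ≤ C2 * Q₀ ^ 2 := by
      have h0 := mul_le_mul (mul_le_mul hdg'b (hα'b t ht) (abs_nonneg _) hC2n)
        (hα'b t ht) (abs_nonneg _) (by positivity)
      have he : C2 * Q₀ * Q₀ = C2 * Q₀ ^ 2 := by ring
      linarith
    have h2 : t * (|dg' (α t)| * |α' t| * |α' t|) ≤ T * (C2 * Q₀ ^ 2) :=
      mul_le_mul ht.2 h1 (by positivity) hT.le
    have h4 : T * (C2 * Q₀ ^ 2) = T * C2 * Q₀ ^ 2 := by ring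
    have h5 : t * (|dg' (α t)| * |α' t| * |α' t|) = t * (|dg' (α t)| * |α' t|) * |α' t| := by
      ring
    linarith
  have j5 : t * |dg (α t) * α'' t| ≤ T * C1 * Q₀ := by
    rw [abs_mul]
    have h1 : |dg (α t)| * |α'' t| ≤ C1 * Q₀ :=
      mul_le_mul hdgb (hα''b t ht) (abs_nonneg _) hC1n
    have h2 : t * (|dg (α t)| * |α'' t|) ≤ T * (C1 * Q₀) :=
      mul_le_mul ht.2 h1 (by positivity) hT.le
    have h4 : T * (C1 * Q₀) = T * C1 * Q₀ := by ring
    have h5 : t * (|dg (α t)| * |α'' t|) = t * |dg (α t)| * |α'' t| := by ring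
    linarith
  have hmul : t * |psi2 α α' α'' t| ≤
      t * (|α'' t * Real.log t| + |α' t * t⁻¹| + (|α' t * t⁻¹| + |(α t - 1) * (-(t ^ 2)⁻¹)|) +
        (|(dg' (α t) * α' t) * α' t| + |dg (α t) * α'' t|)) :=
    mul_le_mul_of_nonneg_left habs ht.1.le
  have hdist : t * (|α'' t * Real.log t| + |α' t * t⁻¹| +
      (|α' t * t⁻¹| + |(α t - 1) * (-(t ^ 2)⁻¹)|) +
      (|(dg' (α t) * α' t) * α' t| + |dg (α t) * α'' t|)) =
      t * |α'' t * Real.log t| + t * |α' t * t⁻¹| + (t * |α' t * t⁻¹| +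
        t * |(α t - 1) * (-(t ^ 2)⁻¹)|) +
      (t * |(dg' (α t) * α' t) * α' t| + t * |dg (α t) * α'' t|) := by ring
  linarith [j1, j2, j3, j4, j5, hmul, hdist]

lemma gfun2_bound {T M B1 B2 : ℝ} (hM : 0 < M) (hB1 : 0 ≤ B1) (hB2 : 0 ≤ B2)
    {α α' α'' : ℝ → ℝ}
    (hMb : ∀ t ∈ Ioc (0:ℝ) T, Real.exp (psi α t) ≤ M)
    (hψ1b : ∀ t ∈ Ioc (0:ℝ) T, t * psi1 α α' t ^ 2 ≤ B2)
    (hψ2b : ∀ t ∈ Ioc (0:ℝ) T, t * |psi2 α α' α'' t| ≤ B1) :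
    ∀ t ∈ Ioc (0:ℝ) T, |gfun2 α α' α'' t| * t ≤ M * (B1 + B2) := by
  intro t ht
  have hE : 0 < Real.exp (psi α t) := Real.exp_pos _
  have h2 : |(Real.exp (psi α t) * psi1 α α' t) * psi1 α α' t| =
      Real.exp (psi α t) * psi1 α α' t ^ 2 := by
    rw [abs_mul, abs_mul, abs_of_pos hE, mul_assoc, abs_mul_abs_self, ← pow_two]
  have h3 : |Real.exp (psi α t) * psi2 α α' α'' t| =
      Real.exp (psi α t) * |psi2 α α' α'' t| := by
    rw [abs_mul, abs_of_pos hE]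
  have hsplit : |gfun2 α α' α'' t| ≤
      Real.exp (psi α t) * psi1 α α' t ^ 2 + Real.exp (psi α t) * |psi2 α α' α'' t| := by
    unfold gfun2
    have h1 := abs_add_le ((Real.exp (psi α t) * psi1 α α' t) * psi1 α α' t)
      (Real.exp (psi α t) * psi2 α α' α'' t)
    rw [h2, h3] at h1
    exact h1
  have step1 : |gfun2 α α' α'' t| * t ≤
      (Real.exp (psi α t) * psi1 α α' t ^ 2 + Real.exp (psi α t) * |psi2 α α' α'' t|) * t :=
    mul_le_mul_of_nonneg_right hsplit ht.1.le
  have step2 : (Real.exp (psi α t) * psi1 α α' t ^ 2 +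
      Real.exp (psi α t) * |psi2 α α' α'' t|) * t =
      Real.exp (psi α t) * (t * psi1 α α' t ^ 2) +
        Real.exp (psi α t) * (t * |psi2 α α' α'' t|) := by ring
  have n1 : 0 ≤ t * psi1 α α' t ^ 2 := mul_nonneg ht.1.le (sq_nonneg _)
  have n2 : 0 ≤ t * |psi2 α α' α'' t| := mul_nonneg ht.1.le (abs_nonneg _)
  have step3 : Real.exp (psi α t) * (t * psi1 α α' t ^ 2) ≤ M * B2 :=
    mul_le_mul (hMb t ht) (hψ1b t ht) n1 hM.le
  have step4 : Real.exp (psi α t) * (t * |psi2 α α' α'' t|) ≤ M * B1 :=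
    mul_le_mul (hMb t ht) (hψ2b t ht) n2 hM.le
  nlinarith [step1, step2, step3, step4]
theorem stmt4 (T Q₀ αstar : ℝ) (hT : 0 < T) (hQ₀ : 0 < Q₀) (hαstar : 0 < αstar)
    (α α' α'' : ℝ → ℝ) (k k' k'' : ℝ → ℝ)
    (hα : ∀ t ∈ Set.Icc (0:ℝ) T, HasDerivAt α (α' t) t)
    (hα' : ∀ t ∈ Set.Icc (0:ℝ) T, HasDerivAt α' (α'' t) t)
    (hrange : ∀ t ∈ Set.Icc (0:ℝ) T, αstar ≤ α t ∧ α t ≤ 1)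
    (h0 : α 0 = 1)
    (hbound : ∀ t ∈ Set.Icc (0:ℝ) T, |α' t| ≤ Q₀ ∧ |α'' t| ≤ Q₀)
    (hk : ∀ t ∈ Set.Ioc (0:ℝ) T, k t = t ^ (α t - 1) / Real.Gamma (α t))
    (hk' : ∀ t ∈ Set.Ioc (0:ℝ) T, HasDerivAt k (k' t) t)
    (hk'' : ∀ t ∈ Set.Ioc (0:ℝ) T, HasDerivAt k' (k'' t) t) :
    ∃ Q > 0, ∀ t ∈ Set.Ioc (0:ℝ) T, |k'' t| ≤ Q * t⁻¹ := by
  have hIccOf : ∀ t ∈ Set.Ioc (0:ℝ) T, t ∈ Set.Icc (0:ℝ) T := fun t ht => ⟨ht.1.le, ht.2⟩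
  have hαpos : ∀ t ∈ Set.Ioc (0:ℝ) T, 0 < α t :=
    fun t ht => lt_of_lt_of_le hαstar (hrange t (hIccOf t ht)).1
  -- derivative facts for the explicit function
  have hd : ∀ t ∈ Set.Ioc (0:ℝ) T,
      HasDerivAt (gfun α) (gfun1 α α' t) t ∧ HasDerivAt (gfun1 α α') (gfun2 α α' α'' t) t :=
    fun t ht => deriv_lemmas α α' α'' ht.1 (hαpos t ht) (hα t (hIccOf t ht)) (hα' t (hIccOf t ht))
  -- k agrees with gfun on Ioc
  have hkg : ∀ t ∈ Set.Ioc (0:ℝ) T, k t = gfun α t := by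
    intro t ht
    rw [hk t ht]
    unfold gfun psi
    rw [Real.rpow_def_of_pos ht.1, Real.exp_sub,
      Real.exp_log (Real.Gamma_pos_of_pos (hαpos t ht)), mul_comm]
  -- Ioc 0 T is a neighborhood of each of its points within Iic T
  have hIoc : ∀ t ∈ Set.Ioc (0:ℝ) T, Set.Ioc (0:ℝ) T ∈ nhdsWithin t (Set.Iic T) := by
    intro t ht
    rw [mem_nhdsWithin]
    exact ⟨Set.Ioi 0, isOpen_Ioi, ht.1, fun x hx => ⟨hx.1, hx.2⟩⟩
  have hk'g : ∀ t ∈ Set.Ioc (0:ℝ) T, k' t = gfun1 α α' t := by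
    intro t ht
    have h1 : HasDerivWithinAt k (k' t) (Set.Iic T) t := (hk' t ht).hasDerivWithinAt
    have h2 : HasDerivWithinAt k (gfun1 α α' t) (Set.Iic T) t :=
      ((hd t ht).1.hasDerivWithinAt).congr_of_eventuallyEq
        (Filter.eventuallyEq_of_mem (hIoc t ht) (fun x hx => hkg x hx)) (hkg t ht)
    exact (uniqueDiffOn_Iic T t ht.2).eq_deriv _ h1 h2
  have hk''g : ∀ t ∈ Set.Ioc (0:ℝ) T, k'' t = gfun2 α α' α'' t := by
    intro t ht
    have h1 : HasDerivWithinAt k' (k'' t) (Set.Iic T) t := (hk'' t ht).hasDerivWithinAt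
    have h2 : HasDerivWithinAt k' (gfun2 α α' α'' t) (Set.Iic T) t :=
      ((hd t ht).2.hasDerivWithinAt).congr_of_eventuallyEq
        (Filter.eventuallyEq_of_mem (hIoc t ht) (fun x hx => hk'g x hx)) (hk'g t ht)
    exact (uniqueDiffOn_Iic T t ht.2).eq_deriv _ h1 h2
  -- basic range facts
  have h1le : αstar ≤ 1 := by
    have := (hrange 0 ⟨le_refl 0, hT.le⟩).1; rwa [h0] at this
  have hαS : ∀ t ∈ Set.Ioc (0:ℝ) T, α t ∈ Set.Icc αstar 1 := fun t ht => hrange t (hIccOf t ht)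
  have hSsub : Set.Icc αstar 1 ⊆ Set.Ioi (0:ℝ) := fun x hx => lt_of_lt_of_le hαstar hx.1
  -- lower bound for Gamma on the range
  have hcontΓ : ContinuousOn Real.Gamma (Set.Icc αstar 1) := gamma_cdOn.continuousOn.mono hSsub
  obtain ⟨x₀, hx₀S, hx₀min⟩ := (isCompact_Icc (a := αstar) (b := 1)).exists_isMinOn
    ⟨αstar, le_refl _, h1le⟩ hcontΓ
  have hcpos : 0 < Real.Gamma x₀ := Real.Gamma_pos_of_pos (hSsub hx₀S)
  have hcle : ∀ x ∈ Set.Icc αstar 1, Real.Gamma x₀ ≤ Real.Gamma x := fun x hx => hx₀min hx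
  -- bounds for dg and dg' on the range
  have hcdg : ContinuousOn dg (Set.Icc αstar 1) := by
    apply ContinuousOn.div (cont_dgamma.mono hSsub) hcontΓ
    exact fun x hx => (Real.Gamma_pos_of_pos (hSsub hx)).ne'
  obtain ⟨C1, hC1⟩ := (isCompact_Icc (a := αstar) (b := 1)).exists_bound_of_continuousOn hcdg
  have hC1n : 0 ≤ C1 := le_trans (norm_nonneg _) (hC1 αstar ⟨le_refl _, h1le⟩)
  have hcdg' : ContinuousOn dg' (Set.Icc αstar 1) := by
    apply ContinuousOn.div
    · exact ((cont_ddgamma.mono hSsub).mul hcontΓ).sub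
        ((cont_dgamma.mono hSsub).mul (cont_dgamma.mono hSsub))
    · exact hcontΓ.pow 2
    · exact fun x hx => pow_ne_zero 2 (Real.Gamma_pos_of_pos (hSsub hx)).ne'
  obtain ⟨C2, hC2⟩ := (isCompact_Icc (a := αstar) (b := 1)).exists_bound_of_continuousOn hcdg'
  have hC2n : 0 ≤ C2 := le_trans (norm_nonneg _) (hC2 αstar ⟨le_refl _, h1le⟩)
  -- mean value theorem: |α t - 1| ≤ Q₀ t
  have hsub : ∀ t ∈ Set.Ioc (0:ℝ) T, |α t - 1| ≤ Q₀ * t := by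
    have hmvt := norm_image_sub_le_of_norm_deriv_le_segment' (f := α) (f' := α') (a := 0) (b := T)
      (C := Q₀) (fun x hx => (hα x hx).hasDerivWithinAt)
      (fun x hx => (hbound x (Set.Ico_subset_Icc_self hx)).1)
    intro t ht
    have h2 := hmvt t (hIccOf t ht)
    rw [h0] at h2
    simpa [Real.norm_eq_abs] using h2
  have hα'b : ∀ t ∈ Set.Ioc (0:ℝ) T, |α' t| ≤ Q₀ := fun t ht => (hbound t (hIccOf t ht)).1
  have hα''b : ∀ t ∈ Set.Ioc (0:ℝ) T, |α'' t| ≤ Q₀ := fun t ht => (hbound t (hIccOf t ht)).2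
  -- log bounds
  obtain ⟨Cl, hCln, hCl⟩ := log_bound1 hT
  obtain ⟨Cl2, hCl2n, hCl2⟩ := log_bound2 hT
  -- main bounds
  obtain ⟨M, hM, hMb⟩ := exp_psi_bound hQ₀ hcpos hαS hαpos hcle hsub hCl
  obtain ⟨B2, hB2n, hψ1b⟩ := psi1_bound hT hQ₀ hC1n hCln hCl2n hαS hC1 hsub hα'b hCl hCl2
  obtain ⟨B1, hB1n, hψ2b⟩ := psi2_bound hT hQ₀ hC1n hC2n hCln hαS hC1 hC2 hsub hα'b hα''b hCl
  have hfinal := gfun2_bound hM hB1n hB2n hMb hψ1b hψ2b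
  refine ⟨M * (B1 + B2) + 1, ?_, ?_⟩
  · have h9 : 0 ≤ M * (B1 + B2) := mul_nonneg hM.le (add_nonneg hB1n hB2n)
    linarith
  intro t ht
  rw [hk''g t ht, ← div_eq_mul_inv, le_div_iff₀ ht.1]
  have := hfinal t ht
  linarith
end

section
/- Let ρ⁰, ρ¹, ..., ρ^N be elements of a normed space with ρ⁰ = 0, and suppose there is Q > 0 such that for every m, ‖ρ^m‖² ≤ Q τ ∑_{n=1}^{m} ‖(ρⁿ + ρ^{n-1})/2‖·Rⁿ with Rⁿ ≥ 0. Then ‖ρ^m‖ ≤ Q τ ∑_{n=1}^{m} Rⁿ for all 1 ≤ m ≤ N. -/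
theorem stmt19 {E : Type*} [NormedAddCommGroup E] [NormedSpace ℝ E]
    (τ Q : ℝ) (hτ : 0 < τ) (hQ : 0 < Q) (N : ℕ) (hN : 0 < N)
    (ρ : ℕ → E) (R : ℕ → ℝ) (hρ0 : ρ 0 = 0)
    (hR : ∀ n, 0 ≤ R n)
    (hrec : ∀ m ≤ N, ‖ρ m‖ ^ 2 ≤
      Q * τ * ∑ n ∈ Finset.Icc 1 m, ‖(2 : ℝ)⁻¹ • (ρ n + ρ (n - 1))‖ * R n) :
    ∀ m, 1 ≤ m → m ≤ N → ‖ρ m‖ ≤ Q * τ * ∑ n ∈ Finset.Icc 1 m, R n := by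
  intro m hm1 hmN
  obtain ⟨k, hk, hmax⟩ := Finset.exists_max_image (Finset.Icc 0 m) (fun n => ‖ρ n‖)
    ⟨0, by simp⟩
  simp only [Finset.mem_Icc] at hk
  have hkN : k ≤ N := le_trans hk.2 hmN
  have key : ‖ρ k‖ ^ 2 ≤ Q * τ * (∑ n ∈ Finset.Icc 1 k, R n) * ‖ρ k‖ := by
    calc ‖ρ k‖ ^ 2 ≤ Q * τ * ∑ n ∈ Finset.Icc 1 k, ‖(2 : ℝ)⁻¹ • (ρ n + ρ (n - 1))‖ * R n :=
          hrec k hkN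
      _ ≤ Q * τ * ∑ n ∈ Finset.Icc 1 k, ‖ρ k‖ * R n := by
          apply mul_le_mul_of_nonneg_left _ (by positivity)
          apply Finset.sum_le_sum
          intro n hn
          apply mul_le_mul_of_nonneg_right _ (hR n)
          simp only [Finset.mem_Icc] at hn
          have h1 : ‖ρ n‖ ≤ ‖ρ k‖ := hmax n (by simp only [Finset.mem_Icc]; omega)
          have h2 : ‖ρ (n - 1)‖ ≤ ‖ρ k‖ := hmax (n - 1) (by simp only [Finset.mem_Icc]; omega)
          calc ‖(2 : ℝ)⁻¹ • (ρ n + ρ (n - 1))‖ = 2⁻¹ * ‖ρ n + ρ (n - 1)‖ := by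
                rw [norm_smul]; simp
            _ ≤ 2⁻¹ * (‖ρ n‖ + ‖ρ (n - 1)‖) := by gcongr; exact norm_add_le _ _
            _ ≤ ‖ρ k‖ := by linarith
      _ = Q * τ * (∑ n ∈ Finset.Icc 1 k, R n) * ‖ρ k‖ := by
          rw [← Finset.mul_sum]; ring
  have hsumk : 0 ≤ ∑ n ∈ Finset.Icc 1 k, R n := Finset.sum_nonneg fun n _ => hR n
  have hρk : ‖ρ k‖ ≤ Q * τ * ∑ n ∈ Finset.Icc 1 k, R n := by
    rcases eq_or_lt_of_le (norm_nonneg (ρ k)) with h | h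
    · rw [← h]; positivity
    · nlinarith [key]
  have hmono : (∑ n ∈ Finset.Icc 1 k, R n) ≤ ∑ n ∈ Finset.Icc 1 m, R n :=
    Finset.sum_le_sum_of_subset_of_nonneg
      (Finset.Icc_subset_Icc le_rfl hk.2) (fun n _ _ => hR n)
  have hmk : ‖ρ m‖ ≤ ‖ρ k‖ := hmax m (by simp only [Finset.mem_Icc]; omega)
  calc ‖ρ m‖ ≤ ‖ρ k‖ := hmk
    _ ≤ Q * τ * ∑ n ∈ Finset.Icc 1 k, R n := hρk
    _ ≤ Q * τ * ∑ n ∈ Finset.Icc 1 m, R n := by gcongr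
end
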